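/- Let F and F̃ be real p×m matrices, and let V = Image [I; F] and W = Image [I; F̃] be subspaces of ℝ^{m+p}. Then gap(V,W) ≥ ‖F − F̃‖₂ / (√(1+‖F‖₂²) · √(1+‖F̃‖₂²)). -/

import Mathlib

open Matrix

/-- Operator (spectral) norm of a real matrix, induced by Euclidean norms. -/
noncomputable def specNorm {p m : Type*} [Fintype p] [Fintype m] [DecidableEq m]
    (A : Matrix p m ℝ) : ℝ :=
  ‖LinearMap.toContinuousLinearMap (Matrix.toEuclideanLin A)‖

/-- The orthogonal projection onto a subspace, as an endomorphism. -/
noncomputable def projCLM {N : Type*} [Fintype N] [DecidableEq N]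
    (V : Submodule ℝ (EuclideanSpace ℝ N)) :
    EuclideanSpace ℝ N →L[ℝ] EuclideanSpace ℝ N :=
  V.subtypeL.comp (Submodule.orthogonalProjection V)

/-- The gap between two subspaces of ℝ^N. -/
noncomputable def gap {N : Type*} [Fintype N] [DecidableEq N]
    (V W : Submodule ℝ (EuclideanSpace ℝ N)) : ℝ :=
  ‖projCLM V - projCLM W‖

/-! For `x`, the point `u = (x, F x)` of `V` has `‖u‖ ≤ √(1 + ‖F‖²) ‖x‖` and lies within
`gap V W * ‖u‖` of its projection `(y, F̃ y)` onto `W`. Writing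
`(F - F̃) x = (F x - F̃ y) - F̃ (x - y)` and applying Cauchy–Schwarz to
`‖F̃‖ ‖x - y‖ + ‖F x - F̃ y‖` bounds `‖(F - F̃) x‖` by
`√(1 + ‖F̃‖²) ‖(x, F x) - (y, F̃ y)‖`. -/

theorem EuclideanSpace.norm_sq_toLp_sumElim {ι κ : Type*} [Fintype ι] [Fintype κ]
    (a : ι → ℝ) (b : κ → ℝ) :
    ‖(WithLp.toLp 2 (Sum.elim a b) : EuclideanSpace ℝ (ι ⊕ κ))‖ ^ 2
      = ‖(WithLp.toLp 2 a : EuclideanSpace ℝ ι)‖ ^ 2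
        + ‖(WithLp.toLp 2 b : EuclideanSpace ℝ κ)‖ ^ 2 := by
  simp [EuclideanSpace.norm_sq_eq, Fintype.sum_sum_type]

theorem Real.mul_add_le_sqrt_one_add_sq_mul_sqrt (a b c : ℝ) :
    c * a + b ≤ √(1 + c ^ 2) * √(a ^ 2 + b ^ 2) := by
  rw [← Real.sqrt_mul (by positivity)]
  refine Real.le_sqrt_of_sq_le ?_
  nlinarith [sq_nonneg (c * b - a)]

section Graph
variable {m p : Type*} [Fintype m] [DecidableEq m]

noncomputable abbrev graphLin (F : Matrix p m ℝ) :
    EuclideanSpace ℝ m →ₗ[ℝ] EuclideanSpace ℝ (m ⊕ p) :=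
  toEuclideanLin (fromRows (1 : Matrix m m ℝ) F)

theorem graphLin_apply (F : Matrix p m ℝ) (x : EuclideanSpace ℝ m) :
    graphLin F x
      = WithLp.toLp 2 (Sum.elim (WithLp.ofLp x) (WithLp.ofLp (toEuclideanLin F x))) := by
  simp [toLpLin_apply, fromRows_mulVec]

variable [Fintype p]

theorem norm_toEuclideanLin_le_specNorm_mul (A : Matrix p m ℝ) (x : EuclideanSpace ℝ m) :
    ‖toEuclideanLin A x‖ ≤ specNorm A * ‖x‖ :=
  (LinearMap.toContinuousLinearMap (toEuclideanLin A)).le_opNorm x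

theorem specNorm_le_of_norm_le {A : Matrix p m ℝ} {M : ℝ} (hM : 0 ≤ M)
    (h : ∀ x, ‖toEuclideanLin A x‖ ≤ M * ‖x‖) : specNorm A ≤ M :=
  ContinuousLinearMap.opNorm_le_bound _ hM h

theorem norm_sq_graphLin_sub (F G : Matrix p m ℝ) (x y : EuclideanSpace ℝ m) :
    ‖graphLin F x - graphLin G y‖ ^ 2
      = ‖x - y‖ ^ 2 + ‖toEuclideanLin F x - toEuclideanLin G y‖ ^ 2 := by
  rw [graphLin_apply, graphLin_apply, ← WithLp.toLp_sub,
    ← Sum.elim_sub_sub, EuclideanSpace.norm_sq_toLp_sumElim]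
  simp only [← WithLp.ofLp_sub, WithLp.toLp_ofLp]

theorem norm_graphLin_le (F : Matrix p m ℝ) (x : EuclideanSpace ℝ m) :
    ‖graphLin F x‖ ≤ √(1 + specNorm F ^ 2) * ‖x‖ := by
  have hsq : ‖graphLin F x‖ ^ 2 = ‖x‖ ^ 2 + ‖toEuclideanLin F x‖ ^ 2 := by
    simpa using norm_sq_graphLin_sub F F x 0
  have hFx := norm_toEuclideanLin_le_specNorm_mul F x
  refine le_of_pow_le_pow_left₀ two_ne_zero (by positivity) ?_
  rw [hsq, mul_pow, Real.sq_sqrt (by positivity)]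
  nlinarith [mul_self_le_mul_self (norm_nonneg _) hFx]

theorem norm_toEuclideanLin_sub_le_mul_norm_graphLin_sub (F G : Matrix p m ℝ)
    (x y : EuclideanSpace ℝ m) :
    ‖toEuclideanLin (F - G) x‖
      ≤ √(1 + specNorm G ^ 2) * ‖graphLin F x - graphLin G y‖ := by
  have hsplit : toEuclideanLin (F - G) x
      = (toEuclideanLin F x - toEuclideanLin G y) - toEuclideanLin G (x - y) := by
    simp only [map_sub, LinearMap.sub_apply]
    abel
  calc ‖toEuclideanLin (F - G) x‖
      ≤ specNorm G * ‖x - y‖ + ‖toEuclideanLin F x - toEuclideanLin G y‖ := by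
        rw [hsplit, add_comm]
        exact (norm_sub_le _ _).trans (by gcongr; exact norm_toEuclideanLin_le_specNorm_mul G _)
    _ ≤ √(1 + specNorm G ^ 2)
          * √(‖x - y‖ ^ 2 + ‖toEuclideanLin F x - toEuclideanLin G y‖ ^ 2) :=
        Real.mul_add_le_sqrt_one_add_sq_mul_sqrt _ _ _
    _ = _ := by
        rw [← norm_sq_graphLin_sub, Real.sqrt_sq (norm_nonneg _)]

end Graph

section Gap
variable {N : Type*} [Fintype N] [DecidableEq N]

theorem projCLM_apply_mem (W : Submodule ℝ (EuclideanSpace ℝ N)) (u : EuclideanSpace ℝ N) :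
    projCLM W u ∈ W :=
  Submodule.coe_mem _

theorem gap_nonneg (V W : Submodule ℝ (EuclideanSpace ℝ N)) : 0 ≤ gap V W :=
  norm_nonneg _

theorem norm_sub_projCLM_le_gap_mul {V : Submodule ℝ (EuclideanSpace ℝ N)}
    (W : Submodule ℝ (EuclideanSpace ℝ N)) {u : EuclideanSpace ℝ N} (hu : u ∈ V) :
    ‖u - projCLM W u‖ ≤ gap V W * ‖u‖ := by
  have hVu : projCLM V u = u := Submodule.starProjection_eq_self_iff.mpr hu
  simpa [gap, hVu] using (projCLM V - projCLM W).le_opNorm u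

end Gap

theorem gap_image_ge {m p : ℕ} (F Ft : Matrix (Fin p) (Fin m) ℝ) :
    specNorm (F - Ft) / (Real.sqrt (1 + specNorm F ^ 2) * Real.sqrt (1 + specNorm Ft ^ 2))
      ≤ gap (LinearMap.range (Matrix.toEuclideanLin (Matrix.fromRows (1 : Matrix (Fin m) (Fin m) ℝ) F)))
        (LinearMap.range (Matrix.toEuclideanLin (Matrix.fromRows (1 : Matrix (Fin m) (Fin m) ℝ) Ft))) := by
  set V := LinearMap.range (graphLin F)
  set W := LinearMap.range (graphLin Ft)
  rw [div_le_iff₀ (by positivity)]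
  refine specNorm_le_of_norm_le (mul_nonneg (gap_nonneg V W) (by positivity)) fun x => ?_
  obtain ⟨y, hy⟩ := projCLM_apply_mem W (graphLin F x)
  have hgap := gap_nonneg V W
  calc ‖toEuclideanLin (F - Ft) x‖
      ≤ √(1 + specNorm Ft ^ 2) * ‖graphLin F x - graphLin Ft y‖ :=
        norm_toEuclideanLin_sub_le_mul_norm_graphLin_sub F Ft x y
    _ ≤ √(1 + specNorm Ft ^ 2) * (gap V W * ‖graphLin F x‖) := by
        rw [hy]
        gcongr
        exact norm_sub_projCLM_le_gap_mul W (LinearMap.mem_range_self _ x)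
    _ ≤ √(1 + specNorm Ft ^ 2) * (gap V W * (√(1 + specNorm F ^ 2) * ‖x‖)) := by
        gcongr
        exact norm_graphLin_le F x
    _ = gap V W * (√(1 + specNorm F ^ 2) * √(1 + specNorm Ft ^ 2)) * ‖x‖ := by ring
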